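/- arXiv:2304.11550 — 7 statements merged into one kernel-verified Lean document; each statement's English description precedes it below -/
import Mathlib

section
/- Suppose Ĉ ⊇ {f(x₀,u) : x₀ ∈ C, u ∈ U} ∪ C and there exist bounded Borel-measurable functions v : Ĉ → ℝ and w : Ĉ → ℝ such that for all x ∈ Ĉ: (i) E[v(f̂(x,u))] − v(x) ≥ 0, and (ii) v(x) ≤ 1_{X_r}(x) + E[w(f̂(x,u))] − w(x), where 1_{X_r} is the indicator function of X_r. Then {x ∈ C | v(x) > 0} is contained in the 0-reach-avoid set R₀, i.e., for every x₀ ∈ C with v(x₀) > 0, the set of input sequences ω ∈ U^ℕ for which there exists k ∈ ℕ with φ_{x₀}^ω(k) ∈ X_r and φ_{x₀}^ω(l) ∈ C for all 0 ≤ l ≤ k has strictly positive P^∞-measure. -/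
open MeasureTheory
open scoped ENNReal

/-- Trajectory of the discrete-time control system `x(k+1) = f(x(k), u(k))`,
driven by the controller / input sequence `u : ℕ → U` from initial state `x0`. -/
def traj {X U : Type*} (f : X → U → X) (x0 : X) (u : ℕ → U) : ℕ → X
  | 0 => x0
  | k + 1 => f (traj f x0 u k) (u k)

open Classical in
/-- Modified dynamics `f̂(x,u) = f(x,u)` if `x ∈ C \ Xr`, and `f̂(x,u) = x`
otherwise (i.e. if `x ∈ Xr` or `x ∈ Ĉ \ C`). -/
noncomputable def modf {X U : Type*} (f : X → U → X) (C Xr : Set X) (x : X) (u : U) : X :=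
  if x ∈ C \ Xr then f x u else x

/-- Finite-horizon trajectory, as a function of the first `k` inputs. -/
def trajFin {X U : Type*} (F : X → U → X) (x0 : X) : ∀ k, (Fin k → U) → X
  | 0, _ => x0
  | k + 1, ω => F (trajFin F x0 k (fun i => ω i.castSucc)) (ω (Fin.last k))

lemma traj_eq_trajFin {X U : Type*} (F : X → U → X) (x0 : X) (ω : ℕ → U) :
    ∀ k, traj F x0 ω k = trajFin F x0 k (fun i : Fin k => ω i)
  | 0 => rfl
  | k + 1 => by
    show F (traj F x0 ω k) (ω k) = F (trajFin F x0 k fun i => ω ↑i.castSucc) (ω ↑(Fin.last k))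
    rw [traj_eq_trajFin F x0 ω k]
    simp [Fin.coe_castSucc, Fin.val_last]

lemma measurable_trajFin {X U : Type*} [MeasurableSpace X] [MeasurableSpace U]
    {F : X → U → X} (hF : Measurable (Function.uncurry F)) (x0 : X) :
    ∀ k, Measurable (trajFin F x0 k)
  | 0 => measurable_const
  | k + 1 => by
    have h1 : Measurable fun ω : Fin (k + 1) → U => trajFin F x0 k (fun i => ω i.castSucc) :=
      (measurable_trajFin hF x0 k).comp (measurable_pi_lambda _ fun i => measurable_pi_apply _)
    exact hF.comp (h1.prodMk (measurable_pi_apply (Fin.last k)))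

open Classical in
lemma measurable_modf {X U : Type*} [MeasurableSpace X] [MeasurableSpace U]
    {f : X → U → X} (hf : Measurable (Function.uncurry f))
    {C Xr : Set X} (hCm : MeasurableSet C) (hXrm : MeasurableSet Xr) :
    Measurable (Function.uncurry (modf f C Xr)) := by
  have h : Function.uncurry (modf f C Xr)
      = fun p : X × U => if p.1 ∈ C \ Xr then f p.1 p.2 else p.1 := rfl
  rw [h]
  exact Measurable.ite (measurable_fst (hCm.diff hXrm)) hf measurable_fst

lemma integrable_of_abs_le {α : Type*} [MeasurableSpace α] {μ : Measure α} [IsFiniteMeasure μ]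
    {g : α → ℝ} (hg : Measurable g) {B : ℝ} (hB : ∀ a, |g a| ≤ B) : Integrable g μ :=
  (integrable_const B).mono' hg.aestronglyMeasurable
    (ae_of_all _ fun a => by simpa [Real.norm_eq_abs] using hB a)

/-- Proposition 1: if there are bounded measurable `v, w` with
`E[v(f̂(x,u))] − v(x) ≥ 0` and `v(x) ≤ 1_{Xr}(x) + E[w(f̂(x,u))] − w(x)` on `Ĉ`,
then `{x ∈ C | v(x) > 0}` is contained in the 0-reach-avoid set `R₀`. -/
theorem stmt_0 {n : ℕ} {U : Type*} [MeasurableSpace U]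
    (P : Measure U) [IsProbabilityMeasure P]
    (f : (Fin n → ℝ) → U → (Fin n → ℝ)) (hf : Measurable (Function.uncurry f))
    (Xr C Chat : Set (Fin n → ℝ))
    (hXrm : MeasurableSet Xr) (hCm : MeasurableSet C) (hChatm : MeasurableSet Chat)
    (hXrC : Xr ⊆ C) (hCChat : C ⊆ Chat)
    (hstep : ∀ x ∈ C, ∀ u : U, f x u ∈ Chat)
    (Pinf : Measure (ℕ → U)) [IsProbabilityMeasure Pinf]
    (hPinf : ∀ (s : Finset ℕ) (A : ℕ → Set U), (∀ i, MeasurableSet (A i)) →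
      Pinf {ω | ∀ i ∈ s, ω i ∈ A i} = ∏ i ∈ s, P (A i))
    (v w : (Fin n → ℝ) → ℝ) (hv : Measurable v) (hw : Measurable w)
    (hvb : ∃ B, ∀ x ∈ Chat, |v x| ≤ B) (hwb : ∃ B, ∀ x ∈ Chat, |w x| ≤ B)
    (h1 : ∀ x ∈ Chat, (∫ u, v (modf f C Xr x u) ∂P) - v x ≥ 0)
    (h2 : ∀ x ∈ Chat,
      v x ≤ Set.indicator Xr 1 x + (∫ u, w (modf f C Xr x u) ∂P) - w x) :
    ∀ x₀ ∈ C, v x₀ > 0 →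
      0 < Pinf {ω | ∃ k, traj f x₀ ω k ∈ Xr ∧ ∀ l ≤ k, traj f x₀ ω l ∈ C} := by
  classical
  intro x₀ hx₀C hvx₀
  obtain ⟨Bv, hBv⟩ := hvb
  obtain ⟨Bw, hBw⟩ := hwb
  set F : (Fin n → ℝ) → U → (Fin n → ℝ) := modf f C Xr with hFdef
  have hFm : Measurable (Function.uncurry F) := measurable_modf hf hCm hXrm
  have hFif : ∀ x u, F x u = if x ∈ C \ Xr then f x u else x := fun x u => rfl
  -- modified dynamics maps Chat into Chat
  have hFmem : ∀ x ∈ Chat, ∀ u, F x u ∈ Chat := by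
    intro x hx u
    rw [hFif]
    split_ifs with hc
    · exact hstep x hc.1 u
    · exact hx
  have hmem : ∀ k (ω : Fin k → U), trajFin F x₀ k ω ∈ Chat := by
    intro k
    induction k with
    | zero => intro ω; exact hCChat hx₀C
    | succ k ih =>
      intro ω
      exact hFmem _ (ih _) _
  -- finite product measures
  set μm : ∀ k, Measure (Fin k → U) := fun k => Measure.pi (fun _ => P) with hμm
  have hμprob : ∀ k, IsProbabilityMeasure (μm k) := fun k => by
    rw [hμm]; infer_instance
  have htm : ∀ k, Measurable (trajFin F x₀ k) := measurable_trajFin hFm x₀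
  -- key Fubini-type recursion
  have key : ∀ (g : (Fin n → ℝ) → ℝ), Measurable g → ∀ (Bg : ℝ), (∀ x ∈ Chat, |g x| ≤ Bg) →
      ∀ k, (∫ ω, g (trajFin F x₀ (k + 1) ω) ∂(μm (k + 1)))
            = (∫ ω', ∫ u, g (F (trajFin F x₀ k ω') u) ∂P ∂(μm k))
          ∧ Integrable (fun ω' => ∫ u, g (F (trajFin F x₀ k ω') u) ∂P) (μm k) := by
    intro g hg Bg hBg k
    have := hμprob k
    set G : U × (Fin k → U) → ℝ := fun p => g (F (trajFin F x₀ k p.2) p.1) with hG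
    have hGm : Measurable G :=
      hg.comp (hFm.comp (((htm k).comp measurable_snd).prodMk measurable_fst))
    have hGb : ∀ p, |G p| ≤ Bg := fun p => hBg _ (hFmem _ (hmem k p.2) p.1)
    have hGi : Integrable G (P.prod (μm k)) := integrable_of_abs_le hGm hGb
    constructor
    · have hmp := measurePreserving_piFinSuccAbove (fun _ : Fin (k + 1) => P) (Fin.last k)
      have h₁ : ∀ ω : Fin (k + 1) → U,
          g (trajFin F x₀ (k + 1) ω)
            = G ((MeasurableEquiv.piFinSuccAbove (fun _ => U) (Fin.last k)) ω) := by
        intro ω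
        have harg : (Fin.last k).removeNth ω = fun i => ω i.castSucc := by
          funext i
          simp [Fin.removeNth, Fin.succAbove_last]
        simp only [hG, MeasurableEquiv.piFinSuccAbove_apply, trajFin,
          Fin.insertNthEquiv_symm_apply]
        rw [harg]
      calc (∫ ω, g (trajFin F x₀ (k + 1) ω) ∂(μm (k + 1)))
          = ∫ ω, G ((MeasurableEquiv.piFinSuccAbove (fun _ => U) (Fin.last k)) ω)
              ∂(μm (k + 1)) := by simp_rw [h₁]
        _ = ∫ p, G p ∂(P.prod (μm k)) :=
            hmp.integral_comp (MeasurableEquiv.piFinSuccAbove (fun _ => U)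
              (Fin.last k)).measurableEmbedding G
        _ = ∫ u, ∫ ω', G (u, ω') ∂(μm k) ∂P := integral_prod G hGi
        _ = ∫ ω', ∫ u, G (u, ω') ∂P ∂(μm k) := integral_integral_swap hGi
    · exact hGi.integral_prod_right
  -- the three sequences
  set a : ℕ → ℝ := fun k => ∫ ω, v (trajFin F x₀ k ω) ∂(μm k) with ha_def
  set b : ℕ → ℝ := fun k => ∫ ω, w (trajFin F x₀ k ω) ∂(μm k) with hb_def
  set ii : ℕ → ℝ := fun k => ∫ ω, Set.indicator Xr 1 (trajFin F x₀ k ω) ∂(μm k) with hi_def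
  have Iv : ∀ k, Integrable (fun ω => v (trajFin F x₀ k ω)) (μm k) := fun k =>
    have := hμprob k
    integrable_of_abs_le (hv.comp (htm k)) (fun ω => hBv _ (hmem k ω))
  have Iw : ∀ k, Integrable (fun ω => w (trajFin F x₀ k ω)) (μm k) := fun k =>
    have := hμprob k
    integrable_of_abs_le (hw.comp (htm k)) (fun ω => hBw _ (hmem k ω))
  have hind_meas : Measurable (Set.indicator Xr (1 : (Fin n → ℝ) → ℝ)) :=
    measurable_one.indicator hXrm
  have hind_bd : ∀ x, |Set.indicator Xr (1 : (Fin n → ℝ) → ℝ) x| ≤ 1 := by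
    intro x
    by_cases hx : x ∈ Xr
    · simp [Set.indicator_of_mem hx]
    · simp [Set.indicator_of_notMem hx]
  have Ii : ∀ k, Integrable (fun ω => Set.indicator Xr 1 (trajFin F x₀ k ω)) (μm k) := fun k =>
    have := hμprob k
    integrable_of_abs_le (hind_meas.comp (htm k)) (fun ω => hind_bd _)
  -- a is monotone and a 0 = v x₀
  have ha0 : a 0 = v x₀ := by
    have := hμprob 0
    simp [ha_def, trajFin]
  have ha_mono : ∀ k, a k ≤ a (k + 1) := by
    intro k
    have := hμprob k
    obtain ⟨hkey, hkint⟩ := key v hv Bv hBv k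
    rw [ha_def]
    show (∫ ω, v (trajFin F x₀ k ω) ∂(μm k)) ≤ ∫ ω, v (trajFin F x₀ (k + 1) ω) ∂(μm (k + 1))
    rw [hkey]
    refine integral_mono (Iv k) hkint ?_
    intro ω'
    have hx := hmem k ω'
    have := h1 _ hx
    simpa [hFdef] using by linarith [this]
  have ha : ∀ k, v x₀ ≤ a k := by
    intro k
    induction k with
    | zero => rw [ha0]
    | succ k ih => exact ih.trans (ha_mono k)
  -- the martingale inequality from h2
  have hb : ∀ k, a k ≤ ii k + b (k + 1) - b k := by
    intro k
    have := hμprob k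
    obtain ⟨hkeyw, hkintw⟩ := key w hw Bw hBw k
    have hpt : ∀ ω' : Fin k → U,
        v (trajFin F x₀ k ω') ≤ Set.indicator Xr 1 (trajFin F x₀ k ω')
          + (∫ u, w (F (trajFin F x₀ k ω') u) ∂P) - w (trajFin F x₀ k ω') := by
      intro ω'
      have := h2 _ (hmem k ω')
      simpa [hFdef] using this
    have hsum : a k ≤ ∫ ω', (Set.indicator Xr 1 (trajFin F x₀ k ω')
        + (∫ u, w (F (trajFin F x₀ k ω') u) ∂P) - w (trajFin F x₀ k ω')) ∂(μm k) := by
      refine integral_mono (Iv k) ?_ hpt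
      exact ((Ii k).add hkintw).sub (Iw k)
    have hIadd : Integrable (fun ω' => Set.indicator Xr 1 (trajFin F x₀ k ω')
        + ∫ u, w (F (trajFin F x₀ k ω') u) ∂P) (μm k) := (Ii k).add hkintw
    rw [integral_sub hIadd (Iw k), integral_add (Ii k) hkintw] at hsum
    rw [hb_def, hi_def]
    calc a k ≤ _ := hsum
      _ = ii k + b (k + 1) - b k := by rw [← hkeyw]
  -- bound on b
  have hbdd : ∀ k, |b k| ≤ Bw := by
    intro k
    have := hμprob k
    have := norm_integral_le_of_norm_le_const (μ := μm k)
      (f := fun ω => w (trajFin F x₀ k ω)) (C := Bw)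
      (ae_of_all _ fun ω => by simpa [Real.norm_eq_abs] using hBw _ (hmem k ω))
    simpa [Real.norm_eq_abs, measure_univ] using this
  -- there is some k with positive hitting measure
  have hexk : ∃ k, μm k (trajFin F x₀ k ⁻¹' Xr) ≠ 0 := by
    by_contra hcon
    push_neg at hcon
    have hii : ∀ k, ii k = 0 := by
      intro k
      have hae : ∀ᵐ ω ∂(μm k), ω ∉ trajFin F x₀ k ⁻¹' Xr :=
        (measure_eq_zero_iff_ae_notMem (μ := μm k)).mp (hcon k)
      have : (fun ω => Set.indicator Xr (1 : (Fin n → ℝ) → ℝ) (trajFin F x₀ k ω))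
          =ᵐ[μm k] fun _ => (0 : ℝ) := by
        filter_upwards [hae] with ω hω
        simp only [Set.mem_preimage] at hω
        exact Set.indicator_of_notMem hω _
      rw [hi_def]
      calc (∫ ω, Set.indicator Xr 1 (trajFin F x₀ k ω) ∂(μm k))
          = ∫ _, (0:ℝ) ∂(μm k) := integral_congr_ae this
        _ = 0 := integral_zero _ _
    have hstepb : ∀ k, v x₀ ≤ b (k + 1) - b k := by
      intro k
      have := hb k
      rw [hii k] at this
      linarith [ha k]
    have hlin : ∀ k : ℕ, b 0 + k * v x₀ ≤ b k := by
      intro k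
      induction k with
      | zero => simp
      | succ k ih =>
        have := hstepb k
        push_cast
        nlinarith
    obtain ⟨N, hN⟩ := exists_nat_gt ((2 * Bw) / v x₀)
    have h2N : (N : ℝ) * v x₀ ≤ 2 * Bw := by
      have := hlin N
      have h1 := abs_le.1 (hbdd 0)
      have h2 := abs_le.1 (hbdd N)
      linarith
    have : (2 * Bw) / v x₀ * v x₀ < (N : ℝ) * v x₀ :=
      (mul_lt_mul_iff_left₀ hvx₀).2 hN
    rw [div_mul_cancel₀ _ (ne_of_gt hvx₀)] at this
    linarith
  obtain ⟨k, hk⟩ := hexk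
  -- the pushforward of Pinf to the first k coordinates is the product measure
  set restr : (ℕ → U) → (Fin k → U) := fun ω i => ω i with hrestr
  have hrestr_meas : Measurable restr :=
    measurable_pi_lambda _ fun i => measurable_pi_apply _
  have hmap : μm k = Pinf.map restr := by
    rw [hμm]
    refine Measure.pi_eq ?_
    intro s hs
    rw [Measure.map_apply hrestr_meas (MeasurableSet.univ_pi hs)]
    set A : ℕ → Set U := fun i => if h : i < k then s ⟨i, h⟩ else Set.univ with hA
    have hAm : ∀ i, MeasurableSet (A i) := by
      intro i
      rw [hA]
      dsimp only
      split
      · exact hs _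
      · exact MeasurableSet.univ
    have hset : restr ⁻¹' Set.pi Set.univ s = {ω | ∀ i ∈ Finset.range k, ω i ∈ A i} := by
      ext ω
      simp only [Set.mem_preimage, Set.mem_pi, Set.mem_univ, forall_true_left,
        Set.mem_setOf_eq, Finset.mem_range, hA]
      constructor
      · intro h i hi
        rw [dif_pos hi]
        exact h ⟨i, hi⟩
      · intro h i
        have := h i.val i.isLt
        rw [dif_pos i.isLt] at this
        simpa using this
    rw [hset, hPinf _ A hAm]
    rw [← Fin.prod_univ_eq_prod_range (fun i => P (A i)) k]
    refine Finset.prod_congr rfl fun i _ => ?_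
    rw [hA]
    simp only [Fin.is_lt, dif_pos, Fin.eta]
  -- positivity of the hitting probability under Pinf
  have hSm : MeasurableSet (trajFin F x₀ k ⁻¹' Xr) := (htm k) hXrm
  have hhit : 0 < Pinf {ω | traj F x₀ ω k ∈ Xr} := by
    have hseteq : {ω : ℕ → U | traj F x₀ ω k ∈ Xr} = restr ⁻¹' (trajFin F x₀ k ⁻¹' Xr) := by
      ext ω
      simp only [Set.mem_setOf_eq, Set.mem_preimage, traj_eq_trajFin F x₀ ω k, hrestr]
    rw [hseteq, ← Measure.map_apply hrestr_meas hSm, ← hmap]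
    exact pos_iff_ne_zero.mpr hk
  -- from reaching under modified dynamics to the reach-avoid event
  have hincl : ∀ ω : ℕ → U, traj F x₀ ω k ∈ Xr →
      ∃ j, traj f x₀ ω j ∈ Xr ∧ ∀ l ≤ j, traj f x₀ ω l ∈ C := by
    have main : ∀ ω : ℕ → U, ∀ m : ℕ,
        (∀ l ≤ m, traj f x₀ ω l = traj F x₀ ω l ∧ traj F x₀ ω l ∈ C \ Xr)
        ∨ (∃ j, traj f x₀ ω j ∈ Xr ∧ ∀ l ≤ j, traj f x₀ ω l ∈ C)
        ∨ traj F x₀ ω m ∉ C := by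
      intro ω m
      induction m with
      | zero =>
        by_cases hx : x₀ ∈ Xr
        · refine Or.inr (Or.inl ⟨0, hx, ?_⟩)
          intro l hl
          rw [Nat.le_zero.mp hl]
          exact hx₀C
        · refine Or.inl ?_
          intro l hl
          rw [Nat.le_zero.mp hl]
          exact ⟨rfl, hx₀C, hx⟩
      | succ m ih =>
        rcases ih with h | h | h
        · have hm := h m le_rfl
          have heq : traj f x₀ ω (m + 1) = traj F x₀ ω (m + 1) := by
            show f (traj f x₀ ω m) (ω m) = F (traj F x₀ ω m) (ω m)
            rw [hm.1, hFif, if_pos hm.2]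
          by_cases h1' : traj f x₀ ω (m + 1) ∈ Xr
          · refine Or.inr (Or.inl ⟨m + 1, h1', ?_⟩)
            intro l hl
            rcases Nat.lt_succ_iff_lt_or_eq.mp (Nat.lt_succ_of_le hl) with hl' | hl'
            · have := h l (Nat.lt_succ_iff.mp hl')
              rw [this.1]
              exact this.2.1
            · rw [hl']
              exact hXrC h1'
          · by_cases h2' : traj f x₀ ω (m + 1) ∈ C
            · refine Or.inl ?_
              intro l hl
              rcases Nat.lt_succ_iff_lt_or_eq.mp (Nat.lt_succ_of_le hl) with hl' | hl'
              · exact h l (Nat.lt_succ_iff.mp hl')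
              · rw [hl']
                exact ⟨heq, heq ▸ ⟨h2', h1'⟩⟩
            · refine Or.inr (Or.inr ?_)
              rw [← heq]
              exact h2'
        · exact Or.inr (Or.inl h)
        · refine Or.inr (Or.inr ?_)
          show F (traj F x₀ ω m) (ω m) ∉ C
          rw [hFif, if_neg (fun hc => h hc.1)]
          exact h
    intro ω hXr
    rcases main ω k with h | h | h
    · exact absurd hXr (h k le_rfl).2.2
    · exact h
    · exact absurd (hXrC hXr) h
  refine lt_of_lt_of_le hhit (measure_mono ?_)
  intro ω hω
  obtain ⟨j, hj1, hj2⟩ := hincl ω hω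
  exact ⟨j, hj1, hj2⟩
end

section
/- Suppose Ĉ ⊇ {f(x₀,u) : x₀ ∈ C, u ∈ U} ∪ C, let λ ∈ (1,∞), and let v : Ĉ → ℝ be a bounded Borel-measurable function satisfying E[v(f̂(x,u))] − λ·v(x) ≥ 0 for all x ∈ Ĉ \ X_r. Set Ω = {x ∈ C | v(x) > 0}. Then for every x₀ ∈ Ω there exist a controller π and a time k ∈ ℕ such that φ_{x₀}^π(k) ∈ X_r and φ_{x₀}^π(l) ∈ Ω for all 0 ≤ l ≤ k; that is, the system can be driven from x₀ into the target set X_r while remaining inside Ω until the first target hitting time. -/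
open MeasureTheory
open scoped ENNReal

/-- The trajectory up to time `k` depends only on the first `k` inputs. -/
lemma traj_congr {X U : Type*} (f : X → U → X) (x0 : X) {π π' : ℕ → U} :
    ∀ k : ℕ, (∀ i < k, π i = π' i) → traj f x0 π k = traj f x0 π' k := by
  intro k
  induction k with
  | zero => intro _; rfl
  | succ k ih =>
    intro h
    show f (traj f x0 π k) (π k) = f (traj f x0 π' k) (π' k)
    rw [ih (fun i hi => h i (hi.trans (Nat.lt_succ_self k))), h k (Nat.lt_succ_self k)]

/-- Theorem 1: if a bounded measurable `v` satisfies
`E[v(f̂(x,u))] − λ·v(x) ≥ 0` for all `x ∈ Ĉ \ Xr` with `λ > 1`, then from every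
`x₀ ∈ Ω = {x ∈ C | v(x) > 0}` there is a controller driving the system into `Xr`
while staying in `Ω` until the first target hitting time. -/
theorem stmt_1 {n : ℕ} {U : Type*} [MeasurableSpace U]
    (P : Measure U) [IsProbabilityMeasure P]
    (f : (Fin n → ℝ) → U → (Fin n → ℝ)) (hf : Measurable (Function.uncurry f))
    (Xr C Chat : Set (Fin n → ℝ))
    (hXrm : MeasurableSet Xr) (hCm : MeasurableSet C) (hChatm : MeasurableSet Chat)
    (hXrC : Xr ⊆ C) (hCChat : C ⊆ Chat)
    (hstep : ∀ x ∈ C, ∀ u : U, f x u ∈ Chat)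
    (lam : ℝ) (hlam : 1 < lam)
    (v : (Fin n → ℝ) → ℝ) (hv : Measurable v)
    (hvb : ∃ B, ∀ x ∈ Chat, |v x| ≤ B)
    (hcon : ∀ x ∈ Chat \ Xr, (∫ u, v (modf f C Xr x u) ∂P) - lam * v x ≥ 0) :
    ∀ x₀ ∈ {x ∈ C | v x > 0}, ∃ (π : ℕ → U) (k : ℕ),
      traj f x₀ π k ∈ Xr ∧ ∀ l ≤ k, traj f x₀ π l ∈ {x ∈ C | v x > 0} := by
  obtain ⟨B, hB⟩ := hvb
  have hU : Nonempty U := by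
    by_contra h
    rw [not_nonempty_iff] at h
    have h1 : P Set.univ = 1 := measure_univ
    rw [Set.univ_eq_empty_iff.mpr h, measure_empty] at h1
    exact zero_ne_one h1
  -- Key one-step lemma
  have key : ∀ x, x ∈ C → x ∉ Xr → 0 < v x →
      ∃ u, f x u ∈ C ∧ lam * v x ≤ v (f x u) := by
    intro x hxC hxXr hxv
    have hint := hcon x ⟨hCChat hxC, hxXr⟩
    have hmod : ∀ u : U, modf f C Xr x u = f x u := fun u => if_pos ⟨hxC, hxXr⟩
    simp only [hmod] at hint
    have hgmeas : Measurable fun u => v (f x u) :=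
      hv.comp (hf.comp measurable_prodMk_left)
    have hgint : Integrable (fun u => v (f x u)) P := by
      refine Integrable.mono' (integrable_const B) hgmeas.aestronglyMeasurable
        (ae_of_all _ fun u => ?_)
      exact hB _ (hstep x hxC u)
    have hexu : ∃ u, lam * v x ≤ v (f x u) := by
      by_contra h
      push_neg at h
      have hnn : (0 : U → ℝ) ≤ fun u => lam * v x - v (f x u) :=
        fun u => sub_nonneg.mpr (h u).le
      have hint' : Integrable (fun u => lam * v x - v (f x u)) P :=
        (integrable_const (lam * v x)).sub hgint
      have hsupp : Function.support (fun u => lam * v x - v (f x u)) = Set.univ := by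
        ext u
        simp only [Function.mem_support, Set.mem_univ, iff_true]
        exact ne_of_gt (sub_pos.mpr (h u))
      have hpos : 0 < ∫ u, (lam * v x - v (f x u)) ∂P := by
        rw [integral_pos_iff_support_of_nonneg hnn hint', hsupp]
        simp
      have heq : ∫ u, (lam * v x - v (f x u)) ∂P
          = lam * v x - ∫ u, v (f x u) ∂P := by
        rw [integral_sub (integrable_const _) hgint, integral_const]
        simp
      rw [heq] at hpos
      linarith
    obtain ⟨u, hu⟩ := hexu
    have hfu : f x u ∈ Chat := hstep x hxC u
    have hvfu : 0 < v (f x u) := lt_of_lt_of_le (by positivity) hu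
    have hfC : f x u ∈ C := by
      by_contra hnc
      have h2 := hcon (f x u) ⟨hfu, fun hh => hnc (hXrC hh)⟩
      have hmod2 : ∀ w : U, modf f C Xr (f x u) w = f x u :=
        fun w => if_neg (fun hc => hnc hc.1)
      simp only [hmod2, integral_const, measure_univ, probReal_univ, ENNReal.toReal_one,
        smul_eq_mul, one_mul] at h2
      nlinarith
    exact ⟨u, hfC, hu⟩
  intro x₀ hx₀
  obtain ⟨hx₀C, hx₀v⟩ := hx₀
  -- Main induction: either we already reach Xr, or v grows geometrically.
  have main : ∀ k : ℕ,
      (∃ (π : ℕ → U) (k' : ℕ), traj f x₀ π k' ∈ Xr ∧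
        ∀ l ≤ k', traj f x₀ π l ∈ {x ∈ C | v x > 0}) ∨
      (∃ π : ℕ → U, (∀ l ≤ k, traj f x₀ π l ∈ {x ∈ C | v x > 0}) ∧
        lam ^ k * v x₀ ≤ v (traj f x₀ π k)) := by
    intro k
    induction k with
    | zero =>
      right
      refine ⟨fun _ => Classical.arbitrary U, ?_, ?_⟩
      · intro l hl
        interval_cases l
        exact ⟨hx₀C, hx₀v⟩
      · simp [traj]
    | succ k ih =>
      rcases ih with h | ⟨π, hΩ, hval⟩
      · exact Or.inl h
      · by_cases hXr : traj f x₀ π k ∈ Xr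
        · exact Or.inl ⟨π, k, hXr, hΩ⟩
        · obtain ⟨hkC, hkv⟩ := hΩ k le_rfl
          obtain ⟨u, huC, huv⟩ := key _ hkC hXr hkv
          right
          set π' := Function.update π k u with hπ'
          have htraj_eq : ∀ l ≤ k, traj f x₀ π' l = traj f x₀ π l := by
            intro l hl
            refine traj_congr f x₀ l (fun i hi => ?_)
            exact Function.update_of_ne (Nat.ne_of_lt (lt_of_lt_of_le hi hl)) u π
          have hk1 : traj f x₀ π' (k + 1) = f (traj f x₀ π k) u := by
            show f (traj f x₀ π' k) (π' k) = _
            rw [htraj_eq k le_rfl, hπ', Function.update_self]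
          have hpow : 0 < lam ^ k := pow_pos (lt_trans one_pos hlam) k
          refine ⟨π', ?_, ?_⟩
          · intro l hl
            rcases hl.lt_or_eq with hlt | heq
            · have hle := Nat.lt_succ_iff.mp hlt
              rw [htraj_eq l hle]
              exact hΩ l hle
            · subst heq
              rw [hk1]
              exact ⟨huC, lt_of_lt_of_le (by positivity) huv⟩
          · rw [hk1, pow_succ]
            nlinarith
  obtain ⟨k, hk⟩ := pow_unbounded_of_one_lt (B / v x₀) hlam
  rcases main k with h | ⟨π, hΩ, hval⟩
  · exact h
  · exfalso
    obtain ⟨hkC, _⟩ := hΩ k le_rfl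
    have hle : v (traj f x₀ π k) ≤ B := (abs_le.mp (hB _ (hCChat hkC))).2
    have hBlt : B < lam ^ k * v x₀ := (div_lt_iff₀ hx₀v).mp hk
    linarith
end

section
/- Suppose Ĉ ⊇ {f(x₀,u) : x₀ ∈ C, u ∈ U} ∪ C, let λ ∈ (1,∞), let v : Ĉ → ℝ be a bounded Borel-measurable function satisfying E[v(f̂(x,u))] − λ·v(x) ≥ 0 for all x ∈ Ĉ \ X_r, set Ω = {x ∈ C | v(x) > 0}, and let M ≥ sup_{x∈Ĉ} v(x). Let x₀ ∈ Ω \ X_r, let U₁ be the set of controllers π such that there exists k ∈ ℕ with ψ_{x₀}^π(k) ∈ X_r and ψ_{x₀}^π(l) ∈ Ω for all 0 ≤ l ≤ k, and define the minimum target hitting time T_{x₀} = inf_{π∈U₁} inf{k ∈ ℕ : ψ_{x₀}^π(k) ∈ X_r ∧ ∀l ≤ k, ψ_{x₀}^π(l) ∈ Ω}. Then T_{x₀} ≤ log_λ(M / v(x₀)). -/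
open MeasureTheory
open scoped ENNReal

/-- Corollary 2, part 1: the minimum target hitting time
`T_{x₀} = inf_{π ∈ U₁} inf {k | ψ_{x₀}^π(k) ∈ Xr ∧ ∀ l ≤ k, ψ_{x₀}^π(l) ∈ Ω}`
satisfies `T_{x₀} ≤ log_λ (M / v(x₀))`, where `M ≥ sup_{x ∈ Ĉ} v(x)`. -/
theorem stmt_2 {n : ℕ} {U : Type*} [MeasurableSpace U]
    (P : Measure U) [IsProbabilityMeasure P]
    (f : (Fin n → ℝ) → U → (Fin n → ℝ)) (hf : Measurable (Function.uncurry f))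
    (Xr C Chat : Set (Fin n → ℝ))
    (hXrm : MeasurableSet Xr) (hCm : MeasurableSet C) (hChatm : MeasurableSet Chat)
    (hXrC : Xr ⊆ C) (hCChat : C ⊆ Chat)
    (hstep : ∀ x ∈ C, ∀ u : U, f x u ∈ Chat)
    (lam : ℝ) (hlam : 1 < lam)
    (v : (Fin n → ℝ) → ℝ) (hv : Measurable v)
    (hvb : ∃ B, ∀ x ∈ Chat, |v x| ≤ B)
    (hcon : ∀ x ∈ Chat \ Xr, (∫ u, v (modf f C Xr x u) ∂P) - lam * v x ≥ 0)
    (M : ℝ) (hM : ∀ x ∈ Chat, v x ≤ M)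
    (x₀ : Fin n → ℝ) (hx₀ : x₀ ∈ {x ∈ C | v x > 0} \ Xr) :
    (⨅ π ∈ {π : ℕ → U | ∃ k, traj (modf f C Xr) x₀ π k ∈ Xr ∧
        ∀ l ≤ k, traj (modf f C Xr) x₀ π l ∈ {x ∈ C | v x > 0}},
      ⨅ k ∈ {k : ℕ | traj (modf f C Xr) x₀ π k ∈ Xr ∧
        ∀ l ≤ k, traj (modf f C Xr) x₀ π l ∈ {x ∈ C | v x > 0}}, (k : ℝ≥0∞))
      ≤ ENNReal.ofReal (Real.logb lam (M / v x₀)) := by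
  obtain ⟨⟨hx₀C, hx₀v⟩, hx₀Xr⟩ := hx₀
  obtain ⟨B, hB⟩ := hvb
  have hlam0 : (0:ℝ) < lam := by linarith
  -- U is nonempty
  have hUne : Nonempty U := by
    by_contra h
    rw [not_nonempty_iff] at h
    have h1 : P Set.univ = 1 := measure_univ
    rw [Set.univ_eq_empty_iff.mpr h, measure_empty] at h1
    exact zero_ne_one h1
  inhabit U
  -- key existence of a good control input
  have hgood : ∀ x : Fin n → ℝ, ∃ u : U,
      (x ∈ C ∧ x ∉ Xr ∧ 0 < v x) → lam * v x ≤ v (f x u) := by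
    intro x
    by_cases hx : x ∈ C ∧ x ∉ Xr ∧ 0 < v x
    · obtain ⟨hxC, hxXr, hxv⟩ := hx
      have hmem : x ∈ C \ Xr := ⟨hxC, hxXr⟩
      have hint := hcon x ⟨hCChat hxC, hxXr⟩
      have heq : (fun u => v (modf f C Xr x u)) = fun u => v (f x u) := by
        funext u; unfold modf; rw [if_pos hmem]
      rw [heq] at hint
      have hmeas : Measurable fun u : U => v (f x u) :=
        hv.comp (hf.comp (measurable_const.prodMk measurable_id))
      have hintg : Integrable (fun u : U => v (f x u)) P := by
        refine (integrable_const B).mono' hmeas.aestronglyMeasurable ?_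
        exact Filter.Eventually.of_forall fun u => by
          simpa using hB _ (hstep x hxC u)
      by_contra hc
      push_neg at hc
      have hpos : ∀ u : U, 0 < lam * v x - v (f x u) := fun u => by linarith [hc u]
      have hintg2 : Integrable (fun u : U => lam * v x - v (f x u)) P :=
        (integrable_const _).sub hintg
      have h2 : 0 < ∫ u, (lam * v x - v (f x u)) ∂P := by
        rw [integral_pos_iff_support_of_nonneg (fun u => (hpos u).le) hintg2]
        have : Function.support (fun u : U => lam * v x - v (f x u)) = Set.univ := by
          ext u; simp [Function.support, (hpos u).ne']
        rw [this, measure_univ]; norm_num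
      rw [integral_sub (integrable_const _) hintg, integral_const] at h2
      simp [measure_univ] at h2
      linarith
    · exact ⟨default, fun h => absurd h hx⟩
  choose σ hσ using hgood
  -- the trajectory driven by σ
  set y : ℕ → (Fin n → ℝ) := fun k => Nat.rec x₀ (fun _ x => modf f C Xr x (σ x)) k with hy_def
  have hy0 : y 0 = x₀ := rfl
  have hysucc : ∀ k, y (k + 1) = modf f C Xr (y k) (σ (y k)) := fun k => rfl
  set π : ℕ → U := fun k => σ (y k) with hπ_def
  have htraj : ∀ k, traj (modf f C Xr) x₀ π k = y k := by
    intro k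
    induction k with
    | zero => rfl
    | succ k ih => rw [traj, ih]
  -- main invariant
  have key : ∀ k, (∀ l, l < k → y l ∉ Xr) → y k ∈ C ∧ lam ^ k * v x₀ ≤ v (y k) := by
    intro k
    induction k with
    | zero => exact fun _ => ⟨hx₀C, by rw [hy0]; simp⟩
    | succ k ih =>
      intro h
      obtain ⟨hkC, hkv⟩ := ih fun l hl => h l (hl.trans (Nat.lt_succ_self k))
      have hkXr : y k ∉ Xr := h k (Nat.lt_succ_self k)
      have hvk_pos : 0 < v (y k) :=
        lt_of_lt_of_le (by positivity) hkv
      have hmem : y k ∈ C \ Xr := ⟨hkC, hkXr⟩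
      have hstep' : y (k + 1) = f (y k) (σ (y k)) := by
        rw [hysucc]; unfold modf; rw [if_pos hmem]
      have hvsucc : lam * v (y k) ≤ v (y (k + 1)) := by
        rw [hstep']; exact hσ (y k) ⟨hkC, hkXr, hvk_pos⟩
      have hvbd : lam ^ (k + 1) * v x₀ ≤ v (y (k + 1)) := by
        have : lam ^ (k + 1) * v x₀ = lam * (lam ^ k * v x₀) := by ring
        rw [this]
        calc lam * (lam ^ k * v x₀) ≤ lam * v (y k) := by
              exact mul_le_mul_of_nonneg_left hkv hlam0.le
          _ ≤ v (y (k + 1)) := hvsucc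
      have hChat' : y (k + 1) ∈ Chat := by
        rw [hstep']; exact hstep _ hkC _
      refine ⟨?_, hvbd⟩
      by_cases hXr' : y (k + 1) ∈ Xr
      · exact hXrC hXr'
      · by_contra hC'
        have hcon' := hcon (y (k + 1)) ⟨hChat', hXr'⟩
        have heq : (fun u => v (modf f C Xr (y (k+1)) u)) = fun _ => v (y (k+1)) := by
          funext u; unfold modf
          rw [if_neg (fun hh => hC' hh.1)]
        rw [heq, integral_const] at hcon'
        simp [measure_univ] at hcon'
        have hvpos : 0 < v (y (k + 1)) :=
          lt_of_lt_of_le (by positivity) hvbd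
        nlinarith
  -- eventually the trajectory hits Xr
  have hMx : v x₀ ≤ M := hM x₀ (hCChat hx₀C)
  have hhit : ∃ k, y k ∈ Xr := by
    obtain ⟨N, hN⟩ := pow_unbounded_of_one_lt (M / v x₀) hlam
    by_contra h
    push_neg at h
    obtain ⟨hNC, hNv⟩ := key N fun l _ => h l
    have : v (y N) ≤ M := hM _ (hCChat hNC)
    have hMN : M < lam ^ N * v x₀ := by
      rw [div_lt_iff₀ hx₀v] at hN; linarith
    linarith
  classical
  set K := Nat.find hhit with hK_def
  have hKXr : y K ∈ Xr := Nat.find_spec hhit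
  have hKmin : ∀ l, l < K → y l ∉ Xr := fun l hl => Nat.find_min hhit hl
  have hΩ : ∀ l ≤ K, y l ∈ C ∧ 0 < v (y l) := by
    intro l hl
    obtain ⟨hlC, hlv⟩ := key l fun j hj => hKmin j (lt_of_lt_of_le hj hl)
    exact ⟨hlC, lt_of_lt_of_le (by positivity) hlv⟩
  -- the bound on K
  obtain ⟨hKC, hKv⟩ := key K hKmin
  have hvKM : v (y K) ≤ M := hM _ (hCChat hKC)
  have hpowle : lam ^ K ≤ M / v x₀ := by
    rw [le_div_iff₀ hx₀v]; linarith
  have hKle : (K : ℝ) ≤ Real.logb lam (M / v x₀) := by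
    have h1 : Real.logb lam (lam ^ K) ≤ Real.logb lam (M / v x₀) :=
      Real.logb_le_logb_of_le hlam (by positivity) hpowle
    rwa [Real.logb_pow, Real.logb_self_eq_one hlam, mul_one] at h1
  -- conclude
  have hπmem : π ∈ {π : ℕ → U | ∃ k, traj (modf f C Xr) x₀ π k ∈ Xr ∧
      ∀ l ≤ k, traj (modf f C Xr) x₀ π l ∈ {x ∈ C | v x > 0}} := by
    refine ⟨K, ?_, ?_⟩
    · rw [htraj]; exact hKXr
    · intro l hl; rw [htraj]; exact hΩ l hl
  refine le_trans (iInf₂_le_of_le π hπmem (iInf₂_le_of_le K ?_ ?_)) le_rfl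
  · constructor
    · rw [htraj]; exact hKXr
    · intro l hl; rw [htraj]; exact hΩ l hl
  · rw [← ENNReal.ofReal_natCast]
    exact ENNReal.ofReal_le_ofReal hKle
end

section
/- Suppose Ĉ ⊇ {f(x₀,u) : x₀ ∈ C, u ∈ U} ∪ C and X_r ⊆ C ⊆ Ĉ, and let λ ∈ (1,∞) and v : Ĉ → ℝ be Borel measurable and bounded. Then the constraint 'E[v(f̂(x,u))] − λ·v(x) ≥ 0 for all x ∈ Ĉ \ X_r' holds if and only if the following two conditions hold: (i) E[v(f(x,u))] − λ·v(x) ≥ 0 for all x ∈ C \ X_r, and (ii) v(x) ≤ 0 for all x ∈ Ĉ \ C. -/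
open MeasureTheory
open scoped ENNReal

/-- equivalence of constraint (7) with the pair of constraints (8):
`E[v(f̂(x,u))] − λ·v(x) ≥ 0` on `Ĉ \ Xr` holds iff
`E[v(f(x,u))] − λ·v(x) ≥ 0` on `C \ Xr` and `v ≤ 0` on `Ĉ \ C`. -/
theorem stmt_4 {n : ℕ} {U : Type*} [MeasurableSpace U]
    (P : Measure U) [IsProbabilityMeasure P]
    (f : (Fin n → ℝ) → U → (Fin n → ℝ)) (hf : Measurable (Function.uncurry f))
    (Xr C Chat : Set (Fin n → ℝ))
    (hXrm : MeasurableSet Xr) (hCm : MeasurableSet C) (hChatm : MeasurableSet Chat)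
    (hXrC : Xr ⊆ C) (hCChat : C ⊆ Chat)
    (hstep : ∀ x ∈ C, ∀ u : U, f x u ∈ Chat)
    (lam : ℝ) (hlam : 1 < lam)
    (v : (Fin n → ℝ) → ℝ) (hv : Measurable v)
    (hvb : ∃ B, ∀ x ∈ Chat, |v x| ≤ B) :
    (∀ x ∈ Chat \ Xr, (∫ u, v (modf f C Xr x u) ∂P) - lam * v x ≥ 0) ↔
      ((∀ x ∈ C \ Xr, (∫ u, v (f x u) ∂P) - lam * v x ≥ 0) ∧
        (∀ x ∈ Chat \ C, v x ≤ 0)) := by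
  have hmod_in : ∀ x ∈ C \ Xr, ∀ u, modf f C Xr x u = f x u := by
    intro x hx u; simp [modf, hx]
  have hmod_out : ∀ x ∉ C \ Xr, ∀ u, modf f C Xr x u = x := by
    intro x hx u; simp [modf, hx]
  constructor
  · intro h
    constructor
    · intro x hx
      have := h x ⟨hCChat hx.1, hx.2⟩
      rwa [integral_congr_ae (Filter.Eventually.of_forall (fun u => congrArg v (hmod_in x hx u)))] at this
    · intro x hx
      have hx' : x ∉ C \ Xr := fun h' => hx.2 h'.1
      have := h x ⟨hx.1, fun h' => hx.2 (hXrC h')⟩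
      rw [integral_congr_ae (Filter.Eventually.of_forall (fun u => congrArg v (hmod_out x hx' u)))] at this
      rw [integral_const] at this
      simp at this
      nlinarith
  · rintro ⟨h1, h2⟩ x hx
    by_cases hxc : x ∈ C \ Xr
    · rw [integral_congr_ae (Filter.Eventually.of_forall (fun u => congrArg v (hmod_in x hxc u)))]
      exact h1 x hxc
    · have hxC : x ∉ C := fun h' => hxc ⟨h', hx.2⟩
      have hv0 := h2 x ⟨hx.1, hxC⟩
      rw [integral_congr_ae (Filter.Eventually.of_forall (fun u => congrArg v (hmod_out x hxc u)))]
      rw [integral_const]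
      simp
      nlinarith
end

section
/- Suppose Ĉ ⊇ {f(x₀,u) : x₀ ∈ C, u ∈ U} ∪ C and X_r ⊆ C ⊆ Ĉ. For every x₀ ∈ C and every controller π, the original system achieves the reach-avoid objective if and only if the modified system does: (∃k ∈ ℕ, φ_{x₀}^π(k) ∈ X_r ∧ ∀l ≤ k, φ_{x₀}^π(l) ∈ C) ⟺ (∃k ∈ ℕ, ψ_{x₀}^π(k) ∈ X_r ∧ ∀l ≤ k, ψ_{x₀}^π(l) ∈ C). Consequently, the controlled reach-avoid set of the modified system equals the controlled reach-avoid set R of the original system. -/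
open MeasureTheory
open scoped ENNReal

/-- If the original trajectory stays in `C \ Xr` before time `l`, the modified
trajectory agrees with it up to time `l`. -/
lemma traj_modf_eq_of_f {X U : Type*} (f : X → U → X) (C Xr : Set X)
    (x₀ : X) (π : ℕ → U) (l : ℕ)
    (h : ∀ j < l, traj f x₀ π j ∈ C \ Xr) :
    traj (modf f C Xr) x₀ π l = traj f x₀ π l := by
  induction l with
  | zero => rfl
  | succ l ih =>
    have hl := h l (Nat.lt_succ_self l)
    show modf f C Xr (traj (modf f C Xr) x₀ π l) (π l) = f (traj f x₀ π l) (π l)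
    rw [ih (fun j hj => h j (hj.trans (Nat.lt_succ_self l)))]
    simp [modf, hl]

/-- If the modified trajectory stays in `C \ Xr` before time `l`, it agrees
with the original trajectory up to time `l`. -/
lemma traj_modf_eq_of_modf {X U : Type*} (f : X → U → X) (C Xr : Set X)
    (x₀ : X) (π : ℕ → U) (l : ℕ)
    (h : ∀ j < l, traj (modf f C Xr) x₀ π j ∈ C \ Xr) :
    traj (modf f C Xr) x₀ π l = traj f x₀ π l := by
  induction l with
  | zero => rfl
  | succ l ih =>
    have hl := h l (Nat.lt_succ_self l)
    have ihl := ih (fun j hj => h j (hj.trans (Nat.lt_succ_self l)))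
    show modf f C Xr (traj (modf f C Xr) x₀ π l) (π l) = f (traj f x₀ π l) (π l)
    rw [← ihl]
    simp [modf, hl]

/-- for every `x₀ ∈ C` and every controller, the original system
achieves the reach-avoid objective iff the modified system does; consequently the
controlled reach-avoid set of the modified system equals that of the original
system. -/
theorem stmt_8 {n : ℕ} {U : Type*}
    (f : (Fin n → ℝ) → U → (Fin n → ℝ))
    (Xr C Chat : Set (Fin n → ℝ))
    (hXrC : Xr ⊆ C) (hCChat : C ⊆ Chat)
    (hstep : ∀ x ∈ C, ∀ u : U, f x u ∈ Chat) :
    (∀ x₀ ∈ C, ∀ π : ℕ → U,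
      ((∃ k, traj f x₀ π k ∈ Xr ∧ ∀ l ≤ k, traj f x₀ π l ∈ C) ↔
        (∃ k, traj (modf f C Xr) x₀ π k ∈ Xr ∧
          ∀ l ≤ k, traj (modf f C Xr) x₀ π l ∈ C))) ∧
    {x₀ ∈ C | ∃ (π : ℕ → U) (k : ℕ), traj (modf f C Xr) x₀ π k ∈ Xr ∧
        ∀ l ≤ k, traj (modf f C Xr) x₀ π l ∈ C} =
      {x₀ ∈ C | ∃ (π : ℕ → U) (k : ℕ), traj f x₀ π k ∈ Xr ∧
        ∀ l ≤ k, traj f x₀ π l ∈ C} := by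

  classical
  have main : ∀ x₀ ∈ C, ∀ π : ℕ → U,
      ((∃ k, traj f x₀ π k ∈ Xr ∧ ∀ l ≤ k, traj f x₀ π l ∈ C) ↔
        (∃ k, traj (modf f C Xr) x₀ π k ∈ Xr ∧
          ∀ l ≤ k, traj (modf f C Xr) x₀ π l ∈ C)) := by
    intro x₀ hx₀ π
    constructor
    · rintro hP
      have hk := Nat.find_spec hP
      set k := Nat.find hP with hkdef
      have hnotXr : ∀ l < k, traj f x₀ π l ∉ Xr := by
        intro l hl hmem
        exact Nat.find_min hP hl ⟨hmem, fun j hj => hk.2 j (hj.trans hl.le)⟩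
      have heq : ∀ l ≤ k, traj (modf f C Xr) x₀ π l = traj f x₀ π l := by
        intro l hl
        exact traj_modf_eq_of_f f C Xr x₀ π l
          (fun j hj => ⟨hk.2 j ((hj.le.trans hl)), hnotXr j (lt_of_lt_of_le hj hl)⟩)
      exact ⟨k, by rw [heq k le_rfl]; exact hk.1,
        fun l hl => by rw [heq l hl]; exact hk.2 l hl⟩
    · rintro hP
      have hk := Nat.find_spec hP
      set k := Nat.find hP with hkdef
      have hnotXr : ∀ l < k, traj (modf f C Xr) x₀ π l ∉ Xr := by
        intro l hl hmem
        exact Nat.find_min hP hl ⟨hmem, fun j hj => hk.2 j (hj.trans hl.le)⟩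
      have heq : ∀ l ≤ k, traj (modf f C Xr) x₀ π l = traj f x₀ π l := by
        intro l hl
        exact traj_modf_eq_of_modf f C Xr x₀ π l
          (fun j hj => ⟨hk.2 j ((hj.le.trans hl)), hnotXr j (lt_of_lt_of_le hj hl)⟩)
      exact ⟨k, by rw [← heq k le_rfl]; exact hk.1,
        fun l hl => by rw [← heq l hl]; exact hk.2 l hl⟩
  refine ⟨main, ?_⟩
  ext x₀
  simp only [Set.mem_setOf_eq]
  constructor
  · rintro ⟨hx₀, π, hk⟩
    exact ⟨hx₀, π, (main x₀ hx₀ π).mpr hk⟩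
  · rintro ⟨hx₀, π, hk⟩
    exact ⟨hx₀, π, (main x₀ hx₀ π).mp hk⟩
end

section
/- Suppose Ĉ ⊇ {f(x₀,u) : x₀ ∈ C, u ∈ U} ∪ C, let λ ∈ (1,∞), and let v : Ĉ → ℝ be a bounded Borel-measurable function satisfying E[v(f(x,u))] − λ·v(x) ≥ 0 for all x ∈ C \ X_r and v(x) ≤ 0 for all x ∈ Ĉ \ C. Set Ω = {x ∈ C | v(x) > 0}. Then for every x₀ ∈ Ω \ X_r there exists u ∈ U such that f(x₀,u) ∈ Ω; i.e., it is always feasible to keep the system inside Ω for one more step before the target set X_r is hit. -/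
open MeasureTheory
open scoped ENNReal

/-- under constraint (8), from every `x₀ ∈ Ω \ Xr` with
`Ω = {x ∈ C | v x > 0}` there exists an input `u` keeping the system inside `Ω`
for one more step, i.e. `f(x₀,u) ∈ Ω`. -/
theorem stmt_10 {n : ℕ} {U : Type*} [MeasurableSpace U]
    (P : Measure U) [IsProbabilityMeasure P]
    (f : (Fin n → ℝ) → U → (Fin n → ℝ)) (hf : Measurable (Function.uncurry f))
    (Xr C Chat : Set (Fin n → ℝ))
    (hXrm : MeasurableSet Xr) (hCm : MeasurableSet C) (hChatm : MeasurableSet Chat)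
    (hXrC : Xr ⊆ C) (hCChat : C ⊆ Chat)
    (hstep : ∀ x ∈ C, ∀ u : U, f x u ∈ Chat)
    (lam : ℝ) (hlam : 1 < lam)
    (v : (Fin n → ℝ) → ℝ) (hv : Measurable v)
    (hvb : ∃ B, ∀ x ∈ Chat, |v x| ≤ B)
    (h1 : ∀ x ∈ C \ Xr, (∫ u, v (f x u) ∂P) - lam * v x ≥ 0)
    (h2 : ∀ x ∈ Chat \ C, v x ≤ 0) :
    ∀ x₀ ∈ {x ∈ C | v x > 0} \ Xr, ∃ u : U, f x₀ u ∈ {x ∈ C | v x > 0} := by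
  rintro x₀ ⟨⟨hC, hvpos⟩, hXr⟩
  by_contra h
  push_neg at h
  have hle : ∀ u : U, v (f x₀ u) ≤ 0 := by
    intro u
    have hChat := hstep x₀ hC u
    by_cases hc : f x₀ u ∈ C
    · by_contra hpos
      push_neg at hpos
      exact h u ⟨hc, hpos⟩
    · exact h2 _ ⟨hChat, hc⟩
  have hint : (∫ u, v (f x₀ u) ∂P) ≤ 0 := integral_nonpos hle
  have := h1 x₀ ⟨hC, hXr⟩
  nlinarith
end

section
/- Suppose Ĉ ⊇ {f(x₀,u) : x₀ ∈ C, u ∈ U} ∪ C, let λ ∈ (1,∞), and let v : Ĉ → ℝ be a bounded Borel-measurable function satisfying E[v(f̂(x,u))] − λ·v(x) ≥ 0 for all x ∈ Ĉ \ X_r. Then {x ∈ C | v(x) > 0} is contained in the 0-reach-avoid set R₀: for every x₀ ∈ C with v(x₀) > 0, the set of input sequences ω ∈ U^ℕ for which there exists k ∈ ℕ with φ_{x₀}^ω(k) ∈ X_r and φ_{x₀}^ω(l) ∈ C for all 0 ≤ l ≤ k has strictly positive P^∞-measure. -/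
open MeasureTheory
open scoped ENNReal

lemma modf_of_not_mem {X U : Type*} (f : X → U → X) {C Xr : Set X} {x : X}
    (h : x ∉ C \ Xr) (u : U) : modf f C Xr x u = x := by simp [modf, h]

lemma modf_of_mem {X U : Type*} (f : X → U → X) {C Xr : Set X} {x : X}
    (h : x ∈ C \ Xr) (u : U) : modf f C Xr x u = f x u := by simp [modf, h]

lemma traj_congr_s12 {X U : Type*} (g : X → U → X) (x₀ : X) {ω ω' : ℕ → U} :
    ∀ m : ℕ, (∀ i, i < m → ω i = ω' i) → traj g x₀ ω m = traj g x₀ ω' m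
  | 0, _ => rfl
  | (m+1), h => by
      simp only [traj]
      rw [traj_congr_s12 g x₀ m (fun i hi => h i (hi.trans (Nat.lt_succ_self m))),
        h m (Nat.lt_succ_self m)]

lemma reach_of_modf {X U : Type*} (f : X → U → X) (C Xr : Set X) (hXrC : Xr ⊆ C)
    (x₀ : X) (ω : ℕ → U) (m : ℕ) (hm : traj (modf f C Xr) x₀ ω m ∈ Xr) :
    ∃ k, traj f x₀ ω k ∈ Xr ∧ ∀ l ≤ k, traj f x₀ ω l ∈ C := by
  classical
  set g := modf f C Xr with hg
  have hfreeze : ∀ j l, j ≤ l → traj g x₀ ω j ∉ C \ Xr →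
      traj g x₀ ω l = traj g x₀ ω j := by
    intro j l hjl hj
    induction l, hjl using Nat.le_induction with
    | base => rfl
    | succ l hl ih =>
      simp only [traj]
      rw [ih]
      exact modf_of_not_mem f hj (ω l)
  have hex : ∃ k, traj g x₀ ω k ∈ Xr := ⟨m, hm⟩
  set k := Nat.find hex with hkdef
  have hkXr : traj g x₀ ω k ∈ Xr := Nat.find_spec hex
  have hCk : ∀ l, l < k → traj g x₀ ω l ∈ C \ Xr := by
    intro l hl
    by_contra hnc
    have hfr := hfreeze l k hl.le hnc
    have hnXr : traj g x₀ ω l ∉ Xr := Nat.find_min hex hl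
    rw [hfr] at hkXr; exact hnXr hkXr
  have heq : ∀ l, l ≤ k → traj f x₀ ω l = traj g x₀ ω l := by
    intro l hl
    induction l with
    | zero => rfl
    | succ l ih =>
      have hl' : l < k := Nat.lt_of_succ_le hl
      simp only [traj]
      rw [ih hl'.le]
      exact (modf_of_mem f (hCk l hl') (ω l)).symm
  refine ⟨k, by rw [heq k le_rfl]; exact hkXr, ?_⟩
  intro l hl
  rcases eq_or_lt_of_le hl with heq2 | hlt
  · rw [heq2, heq k le_rfl]; exact hXrC hkXr
  · rw [heq l hlt.le]; exact (hCk l hlt).1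

lemma integrable_of_bound' {α : Type*} [MeasurableSpace α] (μ : Measure α)
    [IsFiniteMeasure μ] {g : α → ℝ} (B : ℝ) (hg : AEStronglyMeasurable g μ)
    (hb : ∀ a, |g a| ≤ B) : Integrable g μ :=
  (integrable_const B).mono' hg
    (Filter.Eventually.of_forall fun a => by simpa [Real.norm_eq_abs] using hb a)

lemma integral_pi_succ {U : Type*} [MeasurableSpace U] (P : Measure U)
    [IsProbabilityMeasure P] (m : ℕ) (F : (Fin (m+1) → U) → ℝ)
    (hF : Measurable F) (B : ℝ) (hb : ∀ y, |F y| ≤ B) :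
    ∫ y, F y ∂(Measure.pi fun _ : Fin (m+1) => P)
      = ∫ y, ∫ u, F (Fin.snoc y u) ∂P ∂(Measure.pi fun _ : Fin m => P) := by
  have hmp := measurePreserving_piFinSuccAbove (fun _ : Fin (m+1) => P) (Fin.last m)
  set e := MeasurableEquiv.piFinSuccAbove (fun _ : Fin (m+1) => U) (Fin.last m) with he
  have hint : Integrable (fun z : U × (Fin m → U) => F (e.symm z))
      (P.prod (Measure.pi fun _ : Fin m => P)) :=
    integrable_of_bound' _ B (hF.comp e.symm.measurable).aestronglyMeasurable
      (fun z => hb _)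
  have hsymm : ∀ (u : U) (y : Fin m → U), e.symm (u, y) = Fin.snoc y u := by
    intro u y
    simp [he, MeasurableEquiv.piFinSuccAbove, Fin.insertNth_last', Fin.snocEquiv]
  calc ∫ y, F y ∂(Measure.pi fun _ : Fin (m+1) => P)
      = ∫ z, F (e.symm z) ∂(P.prod (Measure.pi fun _ : Fin m => P)) :=
        ((hmp.symm e).integral_comp e.symm.measurableEmbedding F).symm
    _ = ∫ u, ∫ y, F (e.symm (u, y)) ∂(Measure.pi fun _ : Fin m => P) ∂P :=
        integral_prod _ hint
    _ = ∫ y, ∫ u, F (e.symm (u, y)) ∂P ∂(Measure.pi fun _ : Fin m => P) :=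
        integral_integral_swap hint
    _ = ∫ y, ∫ u, F (Fin.snoc y u) ∂P ∂(Measure.pi fun _ : Fin m => P) := by
        simp_rw [hsymm]

/-- if a bounded measurable `v` satisfies
`E[v(f̂(x,u))] − λ·v(x) ≥ 0` on `Ĉ \ Xr` with `λ > 1`, then `{x ∈ C | v x > 0}`
is contained in the 0-reach-avoid set `R₀`: from every such state the set of
input sequences achieving the reach-avoid objective has positive `P^∞`-measure. -/
theorem stmt_12 {n : ℕ} {U : Type*} [MeasurableSpace U]
    (P : Measure U) [IsProbabilityMeasure P]
    (f : (Fin n → ℝ) → U → (Fin n → ℝ)) (hf : Measurable (Function.uncurry f))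
    (Xr C Chat : Set (Fin n → ℝ))
    (hXrm : MeasurableSet Xr) (hCm : MeasurableSet C) (hChatm : MeasurableSet Chat)
    (hXrC : Xr ⊆ C) (hCChat : C ⊆ Chat)
    (hstep : ∀ x ∈ C, ∀ u : U, f x u ∈ Chat)
    (Pinf : Measure (ℕ → U)) [IsProbabilityMeasure Pinf]
    (hPinf : ∀ (s : Finset ℕ) (A : ℕ → Set U), (∀ i, MeasurableSet (A i)) →
      Pinf {ω | ∀ i ∈ s, ω i ∈ A i} = ∏ i ∈ s, P (A i))
    (lam : ℝ) (hlam : 1 < lam)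
    (v : (Fin n → ℝ) → ℝ) (hv : Measurable v)
    (hvb : ∃ B, ∀ x ∈ Chat, |v x| ≤ B)
    (hcon : ∀ x ∈ Chat \ Xr, (∫ u, v (modf f C Xr x u) ∂P) - lam * v x ≥ 0) :
    ∀ x₀ ∈ C, v x₀ > 0 →
      0 < Pinf {ω | ∃ k, traj f x₀ ω k ∈ Xr ∧ ∀ l ≤ k, traj f x₀ ω l ∈ C} := by
  classical
  intro x₀ hx₀ hv₀
  by_contra hle
  have hS0 : Pinf {ω | ∃ k, traj f x₀ ω k ∈ Xr ∧ ∀ l ≤ k, traj f x₀ ω l ∈ C} = 0 :=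
    le_antisymm (not_lt.mp hle) zero_le
  obtain ⟨B₀, hB₀⟩ := hvb
  set B := max B₀ 0 with hBdef
  have hB : ∀ x ∈ Chat, |v x| ≤ B := fun x hx => (hB₀ x hx).trans (le_max_left _ _)
  have hB0 : (0:ℝ) ≤ B := le_max_right _ _
  haveI : Nonempty U := by
    by_contra h
    rw [not_nonempty_iff] at h
    have h1 : (P Set.univ) = 1 := measure_univ
    rw [Set.univ_eq_empty_iff.mpr h] at h1
    simp at h1
  set u₀ := Classical.arbitrary U with hu₀
  set g := modf f C Xr with hgdef
  have hgm : Measurable (Function.uncurry g) := by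
    have hge : Function.uncurry g
        = fun p : (Fin n → ℝ) × U => if p.1 ∈ C \ Xr then f p.1 p.2 else p.1 := by
      funext p; simp [Function.uncurry, hgdef, modf]
    rw [hge]
    exact Measurable.ite ((hCm.diff hXrm).preimage measurable_fst) hf measurable_fst
  have hgChat : ∀ x ∈ Chat, ∀ u, g x u ∈ Chat := by
    intro x hx u
    by_cases hxc : x ∈ C \ Xr
    · rw [hgdef, modf_of_mem f hxc]
      exact hstep x hxc.1 u
    · rw [hgdef, modf_of_not_mem f hxc]
      exact hx
  have hdrift : ∀ x ∈ Chat, x ∉ Xr → lam * v x ≤ ∫ u, v (g x u) ∂P := by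
    intro x hx hxr
    have := hcon x ⟨hx, hxr⟩
    linarith
  have hTm : ∀ m : ℕ, Measurable (fun ω : ℕ → U => fun i : Fin m => ω i) :=
    fun m => measurable_pi_lambda _ fun i => measurable_pi_apply _
  set ext : ∀ m : ℕ, (Fin m → U) → (ℕ → U) :=
    fun m y i => if h : i < m then y ⟨i, h⟩ else u₀ with hext
  set trajF : ∀ m : ℕ, (Fin m → U) → (Fin n → ℝ) :=
    fun m y => traj g x₀ (ext m y) m with htrajF
  have h1 : ∀ (m : ℕ) (ω : ℕ → U), traj g x₀ ω m = trajF m (fun i : Fin m => ω i) := by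
    intro m ω
    apply traj_congr_s12
    intro i hi
    simp [hext, hi]
  have h2 : ∀ (m : ℕ) (y : Fin m → U) (u : U),
      trajF (m+1) (Fin.snoc y u) = g (trajF m y) u := by
    intro m y u
    show traj g x₀ (ext (m+1) (Fin.snoc y u)) (m+1) = _
    simp only [traj]
    have hcoord : traj g x₀ (ext (m+1) (Fin.snoc y u)) m
        = traj g x₀ (ext m y) m := by
      apply traj_congr_s12
      intro i hi
      simp [hext, hi, Nat.lt_succ_of_lt hi, Fin.snoc, Fin.castLT]
    have hlastc : ext (m+1) (Fin.snoc y u) m = u := by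
      simp [hext, Fin.snoc]
    rw [hcoord, hlastc]
  have h3 : ∀ (m : ℕ) (y : Fin (m+1) → U),
      trajF (m+1) y = g (trajF m (Fin.init y)) (y (Fin.last m)) := by
    intro m y
    rw [← h2 m (Fin.init y) (y (Fin.last m)), Fin.snoc_init_self]
  have hmeasF : ∀ m, Measurable (trajF m) := by
    intro m
    induction m with
    | zero => exact measurable_const
    | succ m ih =>
      have hfe : trajF (m+1)
          = fun y => Function.uncurry g (trajF m (Fin.init y), y (Fin.last m)) :=
        funext (h3 m)
      rw [hfe]
      have hinit : Measurable (Fin.init : (Fin (m+1) → U) → Fin m → U) :=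
        measurable_pi_lambda _ fun j => measurable_pi_apply _
      exact hgm.comp ((ih.comp hinit).prodMk (measurable_pi_apply _))
  have hChatF : ∀ m y, trajF m y ∈ Chat := by
    intro m
    induction m with
    | zero => intro y; exact hCChat hx₀
    | succ m ih =>
      intro y
      rw [h3]
      exact hgChat _ (ih _) _
  have hmap : ∀ m : ℕ, Pinf.map (fun ω : ℕ → U => fun i : Fin m => ω i)
      = Measure.pi (fun _ : Fin m => P) := by
    intro m
    refine (Measure.pi_eq fun s hs => ?_).symm
    rw [Measure.map_apply (hTm m) (MeasurableSet.univ_pi hs)]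
    have hset : (fun ω : ℕ → U => fun i : Fin m => ω i) ⁻¹' (Set.pi Set.univ s)
        = {ω : ℕ → U | ∀ i ∈ Finset.range m,
            ω i ∈ (fun j => if h : j < m then s ⟨j, h⟩ else Set.univ) i} := by
      ext ω
      simp only [Set.mem_preimage, Set.mem_pi, Set.mem_univ, forall_true_left,
        Set.mem_setOf_eq, Finset.mem_range]
      constructor
      · intro h i hi
        simp only [dif_pos hi]
        exact h ⟨i, hi⟩
      · intro h i
        have := h i.val i.isLt
        simpa [i.isLt] using this
    rw [hset, hPinf _ _ (fun i => by
      by_cases h : i < m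
      · simp only [dif_pos h]; exact hs _
      · simp [h])]
    rw [← Fin.prod_univ_eq_prod_range]
    exact Finset.prod_congr rfl fun i _ => by simp [i.isLt]
  have hnull : ∀ m : ℕ, (Measure.pi fun _ : Fin m => P) {y | trajF m y ∈ Xr} = 0 := by
    intro m
    have hAm : MeasurableSet {y : Fin m → U | trajF m y ∈ Xr} := (hmeasF m) hXrm
    rw [← hmap m, Measure.map_apply (hTm m) hAm]
    refine measure_mono_null ?_ hS0
    intro ω hω
    refine reach_of_modf f C Xr hXrC x₀ ω m ?_
    rw [← hgdef, h1 m ω]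
    exact hω
  set I : ℕ → ℝ := fun m => ∫ y, v (trajF m y) ∂(Measure.pi fun _ : Fin m => P)
    with hI
  have hintF : ∀ m, Integrable (fun y => v (trajF m y))
      (Measure.pi fun _ : Fin m => P) := fun m =>
    integrable_of_bound' _ B ((hv.comp (hmeasF m)).aestronglyMeasurable)
      (fun y => hB _ (hChatF m y))
  have hI0 : I 0 = v x₀ := by
    have : ∀ y : Fin 0 → U, trajF 0 y = x₀ := fun y => rfl
    simp [hI, this]
  have hIle : ∀ m, I m ≤ B := by
    intro m
    have hb : ∀ y, v (trajF m y) ≤ B := fun y => (abs_le.mp (hB _ (hChatF m y))).2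
    calc I m ≤ ∫ _, B ∂(Measure.pi fun _ : Fin m => P) :=
          integral_mono (hintF m) (integrable_const B) hb
      _ = B := by simp
  have hIstep : ∀ m, lam * I m ≤ I (m+1) := by
    intro m
    have hkey := integral_pi_succ P m (fun y => v (trajF (m+1) y))
      (hv.comp (hmeasF (m+1))) B (fun y => hB _ (hChatF _ y))
    have heqI : I (m+1) = ∫ y, (∫ u, v (g (trajF m y) u) ∂P)
        ∂(Measure.pi fun _ : Fin m => P) := by
      rw [hI]
      simp only
      rw [hkey]
      simp_rw [h2]
    rw [heqI]
    have hunc : Measurable (fun p : (Fin m → U) × U => v (g (trajF m p.1) p.2)) :=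
      hv.comp (hgm.comp (((hmeasF m).comp measurable_fst).prodMk measurable_snd))
    have hinner_meas : StronglyMeasurable
        (fun y : Fin m → U => ∫ u, v (g (trajF m y) u) ∂P) :=
      hunc.stronglyMeasurable.integral_prod_right'
    have hinner_bd : ∀ y : Fin m → U, |∫ u, v (g (trajF m y) u) ∂P| ≤ B := by
      intro y
      have habs : ∀ u, |v (g (trajF m y) u)| ≤ B :=
        fun u => hB _ (hgChat _ (hChatF m y) u)
      calc |∫ u, v (g (trajF m y) u) ∂P| ≤ ∫ u, |v (g (trajF m y) u)| ∂P := by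
            simpa [Real.norm_eq_abs] using
              norm_integral_le_integral_norm (fun u => v (g (trajF m y) u))
        _ ≤ ∫ _, B ∂P := by
            refine integral_mono ?_ (integrable_const B) habs
            exact integrable_of_bound' _ B
              ((hv.comp (hgm.comp (measurable_const.prodMk measurable_id))).abs.aestronglyMeasurable)
              (fun u => by rw [abs_abs]; exact habs u)
        _ = B := by simp
    have hael : ∀ᵐ y ∂(Measure.pi fun _ : Fin m => P),
        lam * v (trajF m y) ≤ ∫ u, v (g (trajF m y) u) ∂P := by
      have hae : ∀ᵐ y ∂(Measure.pi fun _ : Fin m => P), trajF m y ∉ Xr := by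
        rw [ae_iff]
        simpa using hnull m
      filter_upwards [hae] with y hy
      exact hdrift _ (hChatF m y) hy
    calc lam * I m = ∫ y, lam * v (trajF m y) ∂(Measure.pi fun _ : Fin m => P) := by
          rw [integral_const_mul]
      _ ≤ ∫ y, (∫ u, v (g (trajF m y) u) ∂P) ∂(Measure.pi fun _ : Fin m => P) :=
          integral_mono_ae ((hintF m).const_mul lam)
            (integrable_of_bound' _ B hinner_meas.aestronglyMeasurable hinner_bd) hael
  have hIlower : ∀ m, lam ^ m * v x₀ ≤ I m := by
    intro m
    induction m with
    | zero => simp [hI0]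
    | succ m ih =>
      calc lam ^ (m+1) * v x₀ = lam * (lam ^ m * v x₀) := by ring
        _ ≤ lam * I m := by
            exact mul_le_mul_of_nonneg_left ih (by linarith)
        _ ≤ I (m+1) := hIstep m
  obtain ⟨m, hm⟩ := pow_unbounded_of_one_lt (B / v x₀) hlam
  have hBm : B < lam ^ m * v x₀ := (div_lt_iff₀ hv₀).mp hm
  linarith [hIlower m, hIle m]
end
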